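/- arXiv:1910.09192 — 2 statements merged into one kernel-verified Lean document; each statement's English description precedes it below -/
import Mathlib

section
/- For all real z and all real α, β, λ, the function f(z) = [(1 - αz - βz³)² + 1]·φ(z)·Φ(λz)/C(α,β,λ) is nonnegative, where C(α,β,λ) = 1 + 3αβ - αbδ - βbδ(3+2λ²)/(1+λ²) + α²/2 + 15β²/2, and C(α,β,λ) > 0. -/
open Real MeasureTheory Filter

/-- standard normal pdf -/
noncomputable def phi (z : ℝ) : ℝ := (Real.sqrt (2 * Real.pi))⁻¹ * Real.exp (-z ^ 2 / 2)

/-- standard normal cdf -/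
noncomputable def Phi (z : ℝ) : ℝ := ∫ t in Set.Iic z, phi t

noncomputable def bconst : ℝ := Real.sqrt (2 / Real.pi)

noncomputable def del (l : ℝ) : ℝ := l / Real.sqrt (1 + l ^ 2)

/-- GABSN normalizing constant -/
noncomputable def C (a β l : ℝ) : ℝ :=
  1 + 3 * a * β - a * bconst * del l - β * bconst * del l * (3 + 2 * l ^ 2) / (1 + l ^ 2)
    + a ^ 2 / 2 + 15 * β ^ 2 / 2

/-- GABSN density -/
noncomputable def f (a β l z : ℝ) : ℝ :=
  (((1 - a * z - β * z ^ 3) ^ 2 + 1) * phi z * Phi (l * z)) / C a β l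

lemma phi_pos (z : ℝ) : 0 < phi z := by
  unfold phi
  have h : 0 < Real.sqrt (2 * Real.pi) := Real.sqrt_pos.2 (by positivity)
  positivity

lemma Phi_nonneg (z : ℝ) : 0 ≤ Phi z := by
  unfold Phi
  exact setIntegral_nonneg measurableSet_Iic (fun t _ => (phi_pos t).le)

lemma C_pos (a β l : ℝ) : 0 < C a β l := by
  have hl : (0:ℝ) < 1 + l ^ 2 := by positivity
  set u := del l with hu
  have hsq : Real.sqrt (1 + l ^ 2) ^ 2 = 1 + l ^ 2 := Real.sq_sqrt hl.le
  have hu2 : u ^ 2 = l ^ 2 / (1 + l ^ 2) := by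
    rw [hu, del, div_pow, hsq]
  have hu1 : u ^ 2 ≤ 1 := by
    rw [hu2, div_le_one hl]; linarith
  have hb2 : bconst ^ 2 = 2 / Real.pi := Real.sq_sqrt (by positivity)
  have hC : C a β l = 1 + 3 * a * β - a * bconst * u - β * bconst * u * (3 - u ^ 2)
      + a ^ 2 / 2 + 15 * β ^ 2 / 2 := by
    have h3 : (3 + 2 * l ^ 2) / (1 + l ^ 2) = 3 - u ^ 2 := by
      rw [hu2]; field_simp; ring
    unfold C
    rw [← hu, mul_div_assoc, h3]
  have hsos : C a β l = ((a + 3 * β - bconst * u) ^ 2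
      + 6 * (β + (bconst * u ^ 3) / 6) ^ 2
      + (2 - (bconst * u) ^ 2 - (bconst * u ^ 3) ^ 2 / 6)) / 2 := by
    rw [hC]; ring
  have hpi : (3:ℝ) < Real.pi := Real.pi_gt_three
  have hrem : 0 < 2 - (bconst * u) ^ 2 - (bconst * u ^ 3) ^ 2 / 6 := by
    have h1 : (bconst * u) ^ 2 = 2 / Real.pi * u ^ 2 := by rw [mul_pow, hb2]
    have h2 : (bconst * u ^ 3) ^ 2 = 2 / Real.pi * (u ^ 2) ^ 3 := by
      rw [mul_pow, hb2]; ring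
    have hu0 : 0 ≤ u ^ 2 := sq_nonneg u
    rw [h1, h2]
    have hpi0 : (0:ℝ) < Real.pi := by linarith
    rw [div_mul_eq_mul_div, div_mul_eq_mul_div]
    have e1 : 2 * u ^ 2 / Real.pi ≤ 2 / 3 := by
      rw [div_le_div_iff₀ hpi0 (by norm_num)]; nlinarith
    have e2 : 2 * (u ^ 2) ^ 3 / Real.pi / 6 ≤ 1 / 9 := by
      rw [div_div, div_le_div_iff₀ (by positivity) (by norm_num)]
      nlinarith [pow_le_one₀ hu0 hu1 (n := 3)]
    linarith
  rw [hsos]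
  nlinarith [sq_nonneg (a + 3 * β - bconst * u), sq_nonneg (β + (bconst * u ^ 3) / 6)]

theorem stmt_1 (a β l : ℝ) : (∀ z : ℝ, 0 ≤ f a β l z) ∧ 0 < C a β l := by
  refine ⟨fun z => ?_, C_pos a β l⟩
  unfold f
  apply div_nonneg _ (C_pos a β l).le
  have := phi_pos z
  have := Phi_nonneg (l * z)
  positivity
end

section
/- ∫_{-∞}^{∞} z³·2φ(z)Φ(λz) dz = bδ(3+2λ²)/(1+λ²), where b = √(2/π) and δ = λ/√(1+λ²); i.e., the third moment of the Azzalini skew normal SN(λ). -/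
/-!
Since `((z² + 2) φ(z))' = -z³ φ(z)`, integrating by parts moves the derivative onto `Φ(λz)`,
whose derivative is `λ φ(λz)`. The product `φ(z) φ(λz)` is a multiple of the Gaussian
`exp (-(1 + λ²) z² / 2)`, so what remains are its zeroth and second moments, both explicit.
-/

open Real MeasureTheory Filter

lemma phi_eq (z : ℝ) : phi z = (√(2 * π))⁻¹ * exp (-(1 / 2) * z ^ 2) := by
  rw [phi]; ring_nf

lemma phi_nonneg (z : ℝ) : 0 ≤ phi z := by
  rw [phi]; positivity

lemma phi_le (z : ℝ) : phi z ≤ (√(2 * π))⁻¹ :=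
  mul_le_of_le_one_right (by positivity) (exp_le_one_iff.2 (by nlinarith [sq_nonneg z]))

lemma continuous_phi : Continuous phi := by
  unfold phi; fun_prop

lemma integrable_pow_mul_phi (n : ℕ) : Integrable fun z : ℝ => z ^ n * phi z := by
  have h := (integrable_rpow_mul_exp_neg_mul_sq (b := 1 / 2) (by norm_num)
    (s := n) (by linarith [n.cast_nonneg (α := ℝ)])).const_mul (√(2 * π))⁻¹
  refine h.congr (Eventually.of_forall fun z => ?_)
  simp only [rpow_natCast, phi_eq]
  ring

lemma integrable_phi : Integrable phi := by
  simpa using integrable_pow_mul_phi 0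

lemma hasDerivAt_Phi (x : ℝ) : HasDerivAt Phi (phi x) x := by
  have hPhi : Phi = fun y => Phi x + ∫ t in x..y, phi t := by
    funext y
    rw [Phi, Phi, intervalIntegral.integral_Iic_sub_Iic integrable_phi.integrableOn
      integrable_phi.integrableOn |>.symm]
    ring
  rw [hPhi]
  exact ((continuous_phi.integral_hasStrictDerivAt x x).hasDerivAt).const_add _

lemma continuous_Phi : Continuous Phi :=
  continuous_iff_continuousAt.2 fun x => (hasDerivAt_Phi x).continuousAt

lemma norm_Phi_le (x : ℝ) : ‖Phi x‖ ≤ ∫ z, phi z := by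
  rw [Phi, norm_of_nonneg (setIntegral_nonneg measurableSet_Iic fun z _ => phi_nonneg z)]
  exact setIntegral_le_integral integrable_phi (Eventually.of_forall phi_nonneg)

lemma hasDerivAt_phi (z : ℝ) : HasDerivAt phi (-(z * phi z)) z := by
  have h := (((hasDerivAt_pow 2 z).const_mul (-(1 / 2) : ℝ)).exp).const_mul (√(2 * π))⁻¹
  rw [show phi = fun z => (√(2 * π))⁻¹ * exp (-(1 / 2) * z ^ 2) from funext phi_eq]
  exact h.congr_deriv (by ring)

lemma hasDerivAt_sq_add_two_mul_phi (z : ℝ) :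
    HasDerivAt (fun z => (z ^ 2 + 2) * phi z) (-(z ^ 3 * phi z)) z :=
  (((hasDerivAt_pow 2 z).add_const 2).mul (hasDerivAt_phi z)).congr_deriv (by ring)

lemma phi_mul_phi (l z : ℝ) :
    phi z * phi (l * z) = (2 * π)⁻¹ * exp (-((1 + l ^ 2) / 2) * z ^ 2) := by
  rw [phi_eq, phi_eq, mul_mul_mul_comm, ← mul_inv, mul_self_sqrt (by positivity), ← exp_add]
  ring_nf

lemma integrable_sq_mul_exp_neg_mul_sq {c : ℝ} (hc : 0 < c) :
    Integrable fun z : ℝ => z ^ 2 * exp (-c * z ^ 2) := by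
  simpa using integrable_rpow_mul_exp_neg_mul_sq hc (s := 2) (by norm_num)

lemma integral_sq_mul_exp_neg_mul_sq {c : ℝ} (hc : 0 < c) :
    ∫ z, z ^ 2 * exp (-c * z ^ 2) = √(π / c) / (2 * c) := by
  have hderiv (z : ℝ) : HasDerivAt (fun z => z * exp (-c * z ^ 2))
      (exp (-c * z ^ 2) - 2 * c * (z ^ 2 * exp (-c * z ^ 2))) z :=
    ((hasDerivAt_id' z).mul ((hasDerivAt_pow 2 z).const_mul (-c)).exp).congr_deriv (by ring)
  have hint2 := integrable_sq_mul_exp_neg_mul_sq hc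
  have h := integral_eq_zero_of_hasDerivAt_of_integrable hderiv
    ((integrable_exp_neg_mul_sq hc).sub (hint2.const_mul _)) (integrable_mul_exp_neg_mul_sq hc)
  rw [integral_sub (integrable_exp_neg_mul_sq hc) (hint2.const_mul _), integral_const_mul,
    integral_gaussian, sub_eq_zero] at h
  rw [h, mul_div_cancel_left₀ _ (by positivity : 2 * c ≠ 0)]

lemma integrable_sq_add_two_mul_phi : Integrable fun z : ℝ => (z ^ 2 + 2) * phi z :=
  ((integrable_pow_mul_phi 2).add (integrable_phi.const_mul 2)).congr
    (Eventually.of_forall fun z => by simp only [Pi.add_apply]; ring)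

lemma integral_pow_three_mul_phi_mul_Phi (l : ℝ) :
    ∫ z, z ^ 3 * phi z * Phi (l * z) = l * ∫ z, (z ^ 2 + 2) * (phi z * phi (l * z)) := by
  have hv (z : ℝ) : HasDerivAt (fun z => Phi (l * z)) (phi (l * z) * l) z :=
    (hasDerivAt_Phi (l * z)).comp z ((hasDerivAt_id' z).const_mul l |>.congr_deriv (mul_one l))
  have hPhi_meas : AEStronglyMeasurable (fun z => Phi (l * z)) :=
    (continuous_Phi.comp (continuous_const_mul l)).aestronglyMeasurable
  have hPhi_bdd : ∀ᵐ z, ‖Phi (l * z)‖ ≤ ∫ z, phi z :=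
    Eventually.of_forall fun z => norm_Phi_le _
  have hv'_bdd : ∀ᵐ z, ‖phi (l * z) * l‖ ≤ (√(2 * π))⁻¹ * |l| :=
    Eventually.of_forall fun z => by
      rw [norm_mul, norm_of_nonneg (phi_nonneg _), norm_eq_abs]
      exact mul_le_mul_of_nonneg_right (phi_le _) (abs_nonneg l)
  have hibp := integral_mul_deriv_eq_deriv_mul_of_integrable
    (fun z _ => hasDerivAt_sq_add_two_mul_phi z) (fun z _ => hv z)
    (integrable_sq_add_two_mul_phi.mul_bdd
      ((continuous_phi.comp (continuous_const_mul l)).mul continuous_const).aestronglyMeasurable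
      hv'_bdd)
    ((integrable_pow_mul_phi 3).neg.mul_bdd hPhi_meas hPhi_bdd)
    (integrable_sq_add_two_mul_phi.mul_bdd hPhi_meas hPhi_bdd)
  simp only [neg_mul, integral_neg, neg_neg] at hibp
  rw [← hibp, ← integral_const_mul]
  congr 1 with z
  ring

lemma sqrt_two_mul_pi : √(2 * π) = bconst * π := by
  rw [bconst, ← sqrt_sq pi_pos.le, ← sqrt_mul (by positivity), sqrt_sq pi_pos.le]
  field_simp

lemma integral_sq_add_two_mul_phi_mul_phi (l : ℝ) :
    ∫ z, (z ^ 2 + 2) * (phi z * phi (l * z))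
      = bconst / (2 * √(1 + l ^ 2)) * (3 + 2 * l ^ 2) / (1 + l ^ 2) := by
  set c := (1 + l ^ 2) / 2 with hc_def
  have hc : 0 < c := by positivity
  have hsplit (z : ℝ) : (z ^ 2 + 2) * (phi z * phi (l * z))
      = (2 * π)⁻¹ * (z ^ 2 * exp (-c * z ^ 2) + 2 * exp (-c * z ^ 2)) := by
    rw [phi_mul_phi]; ring
  have hsqrt : √(π / c) = bconst * π / √(1 + l ^ 2) := by
    rw [hc_def, div_div_eq_mul_div, mul_comm π, sqrt_div' _ (by positivity), sqrt_two_mul_pi]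
  simp_rw [hsplit]
  rw [integral_const_mul, integral_add (integrable_sq_mul_exp_neg_mul_sq hc)
    ((integrable_exp_neg_mul_sq hc).const_mul 2), integral_const_mul,
    integral_sq_mul_exp_neg_mul_sq hc, integral_gaussian, hsqrt]
  field_simp
  ring

theorem stmt_8 (l : ℝ) :
    ∫ z : ℝ, z ^ 3 * (2 * phi z * Phi (l * z))
      = bconst * del l * (3 + 2 * l ^ 2) / (1 + l ^ 2) := by
  simp_rw [show ∀ z, z ^ 3 * (2 * phi z * Phi (l * z)) = 2 * (z ^ 3 * phi z * Phi (l * z)) from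
    fun z => by ring]
  rw [integral_const_mul, integral_pow_three_mul_phi_mul_Phi, integral_sq_add_two_mul_phi_mul_phi,
    del]
  field_simp
end
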